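/- For any invertible real n×n matrix F, the infimum over orthogonal Q of ‖QᵀF − I‖_F equals ‖√(FᵀF) − I‖_F. -/

import Mathlib

open Matrix

noncomputable def frob {n : ℕ} (A : Matrix (Fin n) (Fin n) ℝ) : ℝ :=
  Real.sqrt ((Aᵀ * A).trace)

/-!
Write the polar decomposition `F = R U` with `R = F U⁻¹` orthogonal. For orthogonal `Q`,
`‖Qᵀ F - 1‖² = tr (Fᵀ F) - 2 tr (Qᵀ R U) + n`, so minimising the distance means maximising
`tr (P U)` over orthogonal `P = Qᵀ R`. Since `U` is positive semidefinite, `tr (P U) ≤ tr U`,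
with equality at `P = 1`, i.e. `Q = R`.
-/

section
variable {m n : Type*} [Fintype m] [Fintype n]

lemma trace_transpose_mul_self_nonneg (A : Matrix m n ℝ) : 0 ≤ (Aᵀ * A).trace := by
  simpa using (posSemidef_conjTranspose_mul_self A).trace_nonneg

variable [DecidableEq n]

lemma trace_transpose_sub_one_mul_sub_one (A : Matrix n n ℝ) :
    ((A - 1)ᵀ * (A - 1)).trace = (Aᵀ * A).trace - 2 * A.trace + Fintype.card n := by
  rw [transpose_sub, transpose_one, sub_mul, mul_sub, mul_sub, Matrix.mul_one, Matrix.one_mul,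
    Matrix.mul_one, trace_sub, trace_sub, trace_sub, trace_transpose, trace_one]
  ring

open MatrixOrder in
lemma exists_eq_transpose_mul_self_of_posSemidef {U : Matrix n n ℝ} (hU : U.PosSemidef) :
    ∃ B : Matrix n n ℝ, U = Bᵀ * B := by
  obtain ⟨B, rfl⟩ := CStarAlgebra.nonneg_iff_eq_star_mul_self.mp hU.nonneg
  exact ⟨B, by rw [star_eq_conjTranspose, conjTranspose_eq_transpose_of_trivial]⟩

/-- With `U = Bᵀ B`, `2 (tr U - tr (P U)) = ‖Bᵀ - P Bᵀ‖²`. -/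
lemma trace_mul_le_trace_of_posSemidef {P U : Matrix n n ℝ} (hP : Pᵀ * P = 1)
    (hU : U.PosSemidef) : (P * U).trace ≤ U.trace := by
  obtain ⟨B, rfl⟩ := exists_eq_transpose_mul_self_of_posSemidef hU
  have hnonneg := trace_transpose_mul_self_nonneg (Bᵀ - P * Bᵀ)
  have hexpand : ((Bᵀ - P * Bᵀ)ᵀ * (Bᵀ - P * Bᵀ)).trace
      = 2 * (Bᵀ * B).trace - 2 * (P * (Bᵀ * B)).trace := by
    have hcycle : (B * (P * Bᵀ)).trace = (P * (Bᵀ * B)).trace := by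
      rw [trace_mul_comm, Matrix.mul_assoc]
    have hcycle' : (B * Pᵀ * Bᵀ).trace = (P * (Bᵀ * B)).trace := by
      rw [← trace_transpose, transpose_mul, transpose_mul, transpose_transpose,
        transpose_transpose, hcycle]
    rw [transpose_sub, transpose_mul, transpose_transpose, sub_mul, mul_sub, mul_sub,
      ← Matrix.mul_assoc (B * Pᵀ) P, Matrix.mul_assoc B Pᵀ P, hP, Matrix.mul_one, trace_sub,
      trace_sub, trace_sub, trace_mul_comm B Bᵀ, hcycle, hcycle']
    ring
  linarith

lemma exists_orthogonal_mul_eq_of_mul_self_eq {F U : Matrix n n ℝ} (hU : U.PosDef)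
    (hUF : U * U = Fᵀ * F) : ∃ R : Matrix n n ℝ, Rᵀ * R = 1 ∧ R * U = F := by
  have hUdet : IsUnit U.det := isUnit_iff_ne_zero.mpr hU.det_pos.ne'
  have hUT : Uᵀ = U := by simpa using hU.isHermitian.eq
  refine ⟨F * U⁻¹, ?_, by rw [Matrix.mul_assoc, nonsing_inv_mul U hUdet, Matrix.mul_one]⟩
  calc (F * U⁻¹)ᵀ * (F * U⁻¹) = U⁻¹ * (Fᵀ * F) * U⁻¹ := by
        rw [transpose_mul, transpose_nonsing_inv, hUT, Matrix.mul_assoc, Matrix.mul_assoc,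
          Matrix.mul_assoc]
    _ = 1 := by
        rw [← hUF, Matrix.mul_assoc, Matrix.mul_assoc, mul_nonsing_inv U hUdet, Matrix.mul_one,
          nonsing_inv_mul U hUdet]

end

lemma frob_sub_one_le_frob_mul_sub_one {n : ℕ} {P U : Matrix (Fin n) (Fin n) ℝ}
    (hP : Pᵀ * P = 1) (hU : U.PosSemidef) : frob (U - 1) ≤ frob (P * U - 1) := by
  have hPU : (P * U)ᵀ * (P * U) = Uᵀ * U := by
    rw [transpose_mul, Matrix.mul_assoc, ← Matrix.mul_assoc Pᵀ, hP, Matrix.one_mul]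
  unfold frob
  gcongr
  rw [trace_transpose_sub_one_mul_sub_one, trace_transpose_sub_one_mul_sub_one, hPU]
  linarith [trace_mul_le_trace_of_posSemidef hP hU]

theorem inf_dist_to_orthogonal_general (n : ℕ)
    (F U : Matrix (Fin n) (Fin n) ℝ)
    (hU : U.PosDef) (hU2 : U * U = Fᵀ * F) :
    sInf {x : ℝ | ∃ Q : Matrix (Fin n) (Fin n) ℝ,
        Qᵀ * Q = 1 ∧ x = frob (Qᵀ * F - 1)} = frob (U - 1) := by
  obtain ⟨R, hR, rfl⟩ := exists_orthogonal_mul_eq_of_mul_self_eq hU hU2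
  refine IsLeast.csInf_eq ⟨⟨R, hR, by rw [← Matrix.mul_assoc, hR, Matrix.one_mul]⟩, ?_⟩
  rintro _ ⟨Q, hQ, rfl⟩
  have hQR : (Qᵀ * R)ᵀ * (Qᵀ * R) = 1 := by
    rw [transpose_mul, transpose_transpose, Matrix.mul_assoc, ← Matrix.mul_assoc Q,
      mul_eq_one_comm.mp hQ, Matrix.one_mul, hR]
  rw [← Matrix.mul_assoc]
  exact frob_sub_one_le_frob_mul_sub_one hQR hU.posSemidef

theorem inf_dist_to_orthogonal (n : ℕ)
    (F U : Matrix (Fin n) (Fin n) ℝ) (hF : IsUnit F.det)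
    (hU : U.PosDef) (hU2 : U * U = Fᵀ * F) :
    sInf {x : ℝ | ∃ Q : Matrix (Fin n) (Fin n) ℝ,
        Qᵀ * Q = 1 ∧ x = frob (Qᵀ * F - 1)} = frob (U - 1) :=
  inf_dist_to_orthogonal_general n F U hU hU2
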